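/- Let I₁, I₂ ⊆ Δ be orthogonal subsets of simple roots (every root of I₁ is orthogonal to every root of I₂), and let A = A₁ ∪ A₂ with A_j ⊆ Φ⁺_{I_j}. Then the map (A'₁, A'₂) ↦ A'₁ ∪ A'₂ is a bijection from {A'₁ ⊆ Φ⁺_{I₁} : ∑A'₁ = ∑A₁} × {A'₂ ⊆ Φ⁺_{I₂} : ∑A'₂ = ∑A₂} onto {A' ⊆ Φ⁺ : ∑A' = ∑A}; consequently mult(μ(A)) = mult(μ(A₁))·mult(μ(A₂)). -/

import Mathlib

open Finset

/-- A finite set `Φ` in a real inner ℝ product space is (the set of roots of) a reduced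
crystallographic root system. -/
def IsRootSystem {V : Type*} [NormedAddCommGroup V] [InnerProductSpace ℝ V]
    (Φ : Finset V) : Prop :=
  (0 : V) ∉ Φ ∧
  Submodule.span ℝ (Φ : Set V) = ⊤ ∧
  (∀ α ∈ Φ, ∀ β ∈ Φ, β - ((2 * inner ℝ β α / inner ℝ α α : ℝ)) • α ∈ Φ) ∧
  (∀ α ∈ Φ, ∀ β ∈ Φ, ∃ n : ℤ, (2 * inner ℝ β α / inner ℝ α α : ℝ) = (n : ℝ)) ∧
  (∀ α ∈ Φ, ∀ t : ℝ, t • α ∈ Φ → t = 1 ∨ t = -1)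

/-- `Φpos` is a positive system in the root system `Φ`. -/
def IsPositiveSystem {V : Type*} [NormedAddCommGroup V] [InnerProductSpace ℝ V]
    (Φ Φpos : Finset V) : Prop :=
  Φpos ⊆ Φ ∧
  (∀ α ∈ Φ, α ∈ Φpos ∨ -α ∈ Φpos) ∧
  (∀ α ∈ Φpos, -α ∉ Φpos) ∧
  (∀ α ∈ Φpos, ∀ β ∈ Φpos, α + β ∈ Φ → α + β ∈ Φpos)

section Aux
set_option linter.unusedSectionVars false
variable {V : Type*} [NormedAddCommGroup V] [InnerProductSpace ℝ V] [DecidableEq V]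

lemma inner_self_pos' {x : V} (h : x ≠ 0) : (0:ℝ) < inner ℝ x x :=
  lt_of_le_of_ne real_inner_self_nonneg (fun h0 => h (inner_self_eq_zero.mp h0.symm))

lemma root_ne_zero {Φ : Finset V} (hΦ : IsRootSystem Φ) {α : V} (hα : α ∈ Φ) : α ≠ 0 :=
  fun h => hΦ.1 (h ▸ hα)

lemma neg_root_mem {Φ : Finset V} (hΦ : IsRootSystem Φ) {α : V} (hα : α ∈ Φ) : -α ∈ Φ := by
  have h := hΦ.2.2.1 α hα α hα
  have hne : (inner ℝ α α : ℝ) ≠ 0 := ne_of_gt (inner_self_pos' (root_ne_zero hΦ hα))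
  rw [show (2 * inner ℝ α α / inner ℝ α α : ℝ) = 2 by field_simp] at h
  have h2 : α - (2:ℝ) • α = -α := by
    rw [two_smul]; abel
  rwa [h2] at h

lemma root_sub_mem {Φ : Finset V} (hΦ : IsRootSystem Φ) {α β : V} (hα : α ∈ Φ) (hβ : β ∈ Φ)
    (hne : α ≠ β) (hne' : α ≠ -β) (hpos : 0 < (inner ℝ α β : ℝ)) : α - β ∈ Φ := by
  have hα0 := root_ne_zero hΦ hα
  have hβ0 := root_ne_zero hΦ hβ
  have ia : (0:ℝ) < inner ℝ α α := inner_self_pos' hα0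
  have ib : (0:ℝ) < inner ℝ β β := inner_self_pos' hβ0
  obtain ⟨m, hm⟩ := hΦ.2.2.2.1 β hβ α hα
  obtain ⟨n, hn⟩ := hΦ.2.2.2.1 α hα β hβ
  rw [real_inner_comm α β] at hn
  rw [div_eq_iff (ne_of_gt ib)] at hm
  rw [div_eq_iff (ne_of_gt ia)] at hn
  have hm1 : (1:ℤ) ≤ m := by
    have h0 : (0:ℝ) < (m:ℝ) := by nlinarith
    exact_mod_cast Int.cast_pos.mp (by exact_mod_cast h0)
  have hn1 : (1:ℤ) ≤ n := by
    have h0 : (0:ℝ) < (n:ℝ) := by nlinarith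
    exact_mod_cast Int.cast_pos.mp (by exact_mod_cast h0)
  have key : m = 1 ∨ n = 1 := by
    by_contra hcon
    push_neg at hcon
    have hm2 : (2:ℤ) ≤ m := by omega
    have hn2 : (2:ℤ) ≤ n := by omega
    have hm2' : (2:ℝ) ≤ (m:ℝ) := by exact_mod_cast hm2
    have hn2' : (2:ℝ) ≤ (n:ℝ) := by exact_mod_cast hn2
    have hcs : (inner ℝ α β : ℝ) * inner ℝ α β ≤ inner ℝ α α * inner ℝ β β :=
      real_inner_mul_inner_self_le α β
    have h4 : (2*(inner ℝ α β:ℝ)) * (2*inner ℝ α β) = ((m:ℝ)*inner ℝ β β)*((n:ℝ)*inner ℝ α α) := by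
      rw [← hm, ← hn]
    have hmn4 : (4:ℝ) ≤ (m:ℝ)*n := by nlinarith
    have heq : (inner ℝ α β : ℝ) * inner ℝ α β = inner ℝ α α * inner ℝ β β := by
      nlinarith [h4, mul_pos ia ib, hcs, hmn4]
    set t : ℝ := (inner ℝ α β : ℝ) / inner ℝ β β with ht
    have hz : (inner ℝ (α - t • β) (α - t • β) : ℝ) = 0 := by
      rw [inner_sub_sub_self, real_inner_smul_left, real_inner_smul_right,
        real_inner_smul_right, real_inner_smul_left, real_inner_comm α β, ht]
      field_simp
      nlinarith
    have hαt : α = t • β := sub_eq_zero.mp (inner_self_eq_zero.mp hz)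
    rcases hΦ.2.2.2.2 β hβ t (hαt ▸ hα) with h1 | h1
    · exact hne (by rw [hαt, h1, one_smul])
    · exact hne' (by rw [hαt, h1, neg_smul, one_smul])
  rcases key with h1 | h1
  · have h := hΦ.2.2.1 β hβ α hα
    have h2 : (2 * inner ℝ α β / inner ℝ β β : ℝ) = 1 := by
      rw [div_eq_iff (ne_of_gt ib), hm, h1]; push_cast; ring
    rwa [h2, one_smul] at h
  · have h := hΦ.2.2.1 α hα β hβ
    have h2 : (2 * inner ℝ β α / inner ℝ α α : ℝ) = 1 := by
      rw [real_inner_comm α β, div_eq_iff (ne_of_gt ia), hn, h1]; push_cast; ring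
    rw [h2, one_smul] at h
    have := neg_root_mem hΦ h
    rwa [neg_sub] at this

lemma coeff_unique (Δ : Finset V) (hind : LinearIndependent ℝ (fun δ : Δ => (δ : V)))
    (f g : V → ℝ) (h : ∑ δ ∈ Δ, f δ • δ = ∑ δ ∈ Δ, g δ • δ) : ∀ δ ∈ Δ, f δ = g δ := by
  have h0 : ∑ δ ∈ Δ, (f δ - g δ) • δ = 0 := by
    simp only [sub_smul, Finset.sum_sub_distrib, h, sub_self]
  have h1 : ∑ i : Δ, (f i.1 - g i.1) • (i.1 : V) = 0 := by
    rw [Finset.sum_coe_sort Δ (fun δ => (f δ - g δ) • δ)]; exact h0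
  intro δ hδ
  have := Fintype.linearIndependent_iff.mp hind (fun i => f i.1 - g i.1) h1 ⟨δ, hδ⟩
  linarith [this]

lemma single_sum (Δ : Finset V) {δ : V} (hδ : δ ∈ Δ) :
    ∑ δ' ∈ Δ, (if δ' = δ then (1:ℝ) else 0) • δ' = δ := by
  simp only [ite_smul, one_smul, zero_smul]
  simp [Finset.sum_ite_eq' Δ δ (fun δ' => δ'), hδ]

lemma mem_span_iff_supp (Δ : Finset V) (hind : LinearIndependent ℝ (fun δ : Δ => (δ : V)))
    (I : Finset V) (hI : I ⊆ Δ) (c : V → ℕ) (α : V) (hc : α = ∑ δ ∈ Δ, (c δ : ℝ) • δ) :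
    α ∈ Submodule.span ℝ (I : Set V) ↔ ∀ δ ∈ Δ, δ ∉ I → c δ = 0 := by
  constructor
  · intro h δ hδ hδI
    obtain ⟨f, -, hf⟩ := Submodule.mem_span_finset.mp h
    set g : V → ℝ := fun δ' => if δ' ∈ I then f δ' else 0 with hg
    have h1 : ∑ δ' ∈ Δ, g δ' • δ' = α := by
      rw [← Finset.sum_subset hI (fun x _ hx => by simp [hg, hx])]
      rw [← hf]
      exact Finset.sum_congr rfl fun x hx => by simp [hg, hx]
    have := coeff_unique Δ hind (fun δ => (c δ : ℝ)) g (by rw [h1, ← hc]) δ hδ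
    rw [hg] at this
    simp only [hδI, if_false] at this
    exact_mod_cast this
  · intro h
    have h1 : α = ∑ δ ∈ I, (c δ : ℝ) • δ := by
      rw [hc, Finset.sum_subset hI]
      intro x hx hxI
      simp [h x hx hxI]
    rw [h1]
    exact Submodule.sum_mem _ fun δ hδ => Submodule.smul_mem _ _ (Submodule.subset_span hδ)

lemma span_orth (I₁ I₂ : Finset V) (horth : ∀ a ∈ I₁, ∀ b ∈ I₂, (inner ℝ a b : ℝ) = 0) :
    ∀ x ∈ Submodule.span ℝ (I₁ : Set V), ∀ y ∈ Submodule.span ℝ (I₂ : Set V),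
      (inner ℝ x y : ℝ) = 0 := by
  intro x hx y hy
  obtain ⟨f, -, rfl⟩ := Submodule.mem_span_finset.mp hx
  obtain ⟨g, -, rfl⟩ := Submodule.mem_span_finset.mp hy
  rw [sum_inner]
  refine Finset.sum_eq_zero fun a ha => ?_
  rw [inner_sum]
  refine Finset.sum_eq_zero fun b hb => ?_
  rw [real_inner_smul_left, real_inner_smul_right, horth a ha b hb]
  ring

lemma no_mixed (Φ Φpos Δ : Finset V) (hΦ : IsRootSystem Φ) (hpos : IsPositiveSystem Φ Φpos)
    (hΔpos : Δ ⊆ Φpos)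
    (hdecomp : ∀ α ∈ Φpos, ∃ c : V → ℕ, α = ∑ δ ∈ Δ, (c δ : ℝ) • δ)
    (hind : LinearIndependent ℝ (fun δ : Δ => (δ : V)))
    (I₁ I₂ : Finset V) (hI₁ : I₁ ⊆ Δ) (hI₂ : I₂ ⊆ Δ)
    (horth : ∀ a ∈ I₁, ∀ b ∈ I₂, (inner ℝ a b : ℝ) = 0) :
    ∀ n : ℕ, ∀ α ∈ Φpos, ∀ c : V → ℕ, α = ∑ δ ∈ Δ, (c δ : ℝ) • δ →
      (∑ δ ∈ Δ, c δ) ≤ n → (∀ δ ∈ Δ, δ ∉ I₁ → δ ∉ I₂ → c δ = 0) →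
      α ∈ Submodule.span ℝ (I₁ : Set V) ∨ α ∈ Submodule.span ℝ (I₂ : Set V) := by
  have hdisj : ∀ a, a ∈ I₁ → a ∈ I₂ → False := by
    intro a h1 h2
    have ha0 : a = 0 := inner_self_eq_zero.mp (horth a h1 a h2)
    exact hΦ.1 (ha0 ▸ hpos.1 (hΔpos (hI₁ h1)))
  intro n
  induction n with
  | zero =>
    intro α hα c hc hsum hsupp
    exfalso
    have hall : ∀ δ ∈ Δ, c δ = 0 := by
      intro δ hδ
      have := Finset.sum_eq_zero_iff.mp (Nat.le_zero.mp hsum) δ hδ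
      exact this
    have : α = 0 := by
      rw [hc]; exact Finset.sum_eq_zero fun δ hδ => by simp [hall δ hδ]
    exact root_ne_zero hΦ (hpos.1 hα) this
  | succ n ih =>
    intro α hα c hc hsum hsupp
    set β₁ : V := ∑ δ ∈ I₁, (c δ : ℝ) • δ with hβ₁def
    set β₂ : V := ∑ δ ∈ I₂, (c δ : ℝ) • δ with hβ₂def
    have hdisj' : Disjoint I₁ I₂ := by
      rw [Finset.disjoint_left]; exact fun {a} h1 h2 => hdisj a h1 h2
    have hsub : I₁ ∪ I₂ ⊆ Δ := Finset.union_subset hI₁ hI₂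
    have hαβ : α = β₁ + β₂ := by
      rw [hc, ← Finset.sum_subset hsub (fun x hx hx' => by
        have hx1 : x ∉ I₁ := fun h => hx' (Finset.mem_union_left _ h)
        have hx2 : x ∉ I₂ := fun h => hx' (Finset.mem_union_right _ h)
        simp [hsupp x hx hx1 hx2])]
      rw [Finset.sum_union hdisj']
    have hβ₁mem : β₁ ∈ Submodule.span ℝ (I₁ : Set V) :=
      Submodule.sum_mem _ fun δ hδ => Submodule.smul_mem _ _ (Submodule.subset_span hδ)
    have hβ₂mem : β₂ ∈ Submodule.span ℝ (I₂ : Set V) :=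
      Submodule.sum_mem _ fun δ hδ => Submodule.smul_mem _ _ (Submodule.subset_span hδ)
    by_cases hb1 : β₁ = 0
    · right
      rw [hαβ, hb1, zero_add]; exact hβ₂mem
    by_cases hb2 : β₂ = 0
    · left
      rw [hαβ, hb2, add_zero]; exact hβ₁mem
    -- there is δ₂ ∈ I₂ with c δ₂ ≠ 0
    have hcδ₂ : ∃ δ₂ ∈ I₂, c δ₂ ≠ 0 := by
      by_contra hno
      push_neg at hno
      exact hb2 (Finset.sum_eq_zero fun δ hδ => by simp [hno δ hδ])
    obtain ⟨δ₂, hδ₂I, hδ₂c⟩ := hcδ₂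
    -- inner α β₁ > 0
    have horth21 : (inner ℝ β₂ β₁ : ℝ) = 0 := by
      rw [real_inner_comm]
      exact span_orth I₁ I₂ horth β₁ hβ₁mem β₂ hβ₂mem
    have hip : (0:ℝ) < inner ℝ α β₁ := by
      rw [hαβ, inner_add_left, horth21, add_zero]
      exact inner_self_pos' hb1
    have hsum' : (inner ℝ α β₁ : ℝ) = ∑ δ ∈ I₁, (c δ : ℝ) * inner ℝ α δ := by
      rw [hβ₁def, inner_sum]
      exact Finset.sum_congr rfl fun δ _ => real_inner_smul_right α δ _
    have hexδ : ∃ δ ∈ I₁, 0 < (c δ : ℝ) * inner ℝ α δ := by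
      by_contra hno
      push_neg at hno
      have := Finset.sum_nonpos hno
      rw [← hsum'] at this
      linarith
    obtain ⟨δ, hδI, hδpos⟩ := hexδ
    have hαδ : (0:ℝ) < inner ℝ α δ := by
      by_contra hno
      push_neg at hno
      nlinarith [hδpos, (Nat.cast_nonneg (c δ) : (0:ℝ) ≤ (c δ : ℝ)), hno]
    have hcδ : c δ ≠ 0 := by
      intro h0
      rw [h0] at hδpos
      simp at hδpos
    have hδΔ : δ ∈ Δ := hI₁ hδI
    have hδΦ : δ ∈ Φ := hpos.1 (hΔpos hδΔ)
    have hαΦ : α ∈ Φ := hpos.1 hα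
    by_cases hαδe : α = δ
    · exact Or.inl (hαδe ▸ Submodule.subset_span (Finset.mem_coe.mpr hδI))
    have hne' : α ≠ -δ := by
      intro h
      rw [h, inner_neg_left] at hαδ
      linarith [real_inner_self_nonneg (x := δ)]
    have hγΦ : α - δ ∈ Φ := root_sub_mem hΦ hαΦ hδΦ hαδe hne' hαδ
    rcases hpos.2.1 _ hγΦ with hγ | hγneg
    · -- α - δ ∈ Φpos : induct
      obtain ⟨e, he⟩ := hdecomp _ hγ
      have hkey : ∀ δ' ∈ Δ, (e δ' : ℝ) + (if δ' = δ then 1 else 0) = (c δ' : ℝ) := by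
        apply coeff_unique Δ hind
        simp only [add_smul, Finset.sum_add_distrib]
        rw [← he, single_sum Δ hδΔ, ← hc]
        abel
      have hceδ : c δ = e δ + 1 := by
        have := hkey δ hδΔ
        simp only [if_pos rfl] at this
        exact_mod_cast this.symm
      have heδ' : ∀ δ' ∈ Δ, δ' ≠ δ → e δ' = c δ' := by
        intro δ' hδ' hne
        have := hkey δ' hδ'
        simp only [if_neg hne, add_zero] at this
        exact_mod_cast this
      have hesupp : ∀ δ' ∈ Δ, δ' ∉ I₁ → δ' ∉ I₂ → e δ' = 0 := by
        intro δ' hδ' h1 h2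
        have hne : δ' ≠ δ := fun h => h1 (h ▸ hδI)
        rw [heδ' δ' hδ' hne]
        exact hsupp δ' hδ' h1 h2
      have hesum : ∑ δ' ∈ Δ, e δ' ≤ n := by
        have hceq : ∀ δ' ∈ Δ, c δ' = e δ' + (if δ' = δ then 1 else 0) := by
          intro δ' hδ'
          by_cases h : δ' = δ
          · subst h; simp [hceδ]
          · simp [h, heδ' δ' hδ' h]
        have h1 : ∑ δ' ∈ Δ, c δ' = (∑ δ' ∈ Δ, e δ') + 1 := by
          rw [Finset.sum_congr rfl hceq, Finset.sum_add_distrib]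
          congr 1
          rw [Finset.sum_ite_eq' Δ δ (fun _ => (1:ℕ)), if_pos hδΔ]
        omega
      rcases ih (α - δ) hγ e he hesum hesupp with hsp1 | hsp2
      · left
        have hδsp : δ ∈ Submodule.span ℝ (I₁ : Set V) :=
          Submodule.subset_span (Finset.mem_coe.mpr hδI)
        have := Submodule.add_mem _ hsp1 hδsp
        simpa using this
      · -- α - δ ∈ span I₂ : contradiction
        exfalso
        have hesupp2 : ∀ δ' ∈ Δ, δ' ∉ I₂ → e δ' = 0 :=
          (mem_span_iff_supp Δ hind I₂ hI₂ e _ he).mp hsp2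
        have heδ0 : e δ = 0 := hesupp2 δ hδΔ (fun h => hdisj δ hδI h)
        have hδsp : δ ∈ Submodule.span ℝ (I₁ : Set V) :=
          Submodule.subset_span (Finset.mem_coe.mpr hδI)
        have horthγδ : (inner ℝ (α - δ) δ : ℝ) = 0 := by
          rw [real_inner_comm]
          exact span_orth I₁ I₂ horth δ hδsp (α - δ) hsp2
        have hδδ : (0:ℝ) < inner ℝ δ δ := inner_self_pos' (root_ne_zero hΦ hδΦ)
        have href := hΦ.2.2.1 δ hδΦ α hαΦ
        have hratio : (2 * inner ℝ α δ / inner ℝ δ δ : ℝ) = 2 := by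
          have : (inner ℝ α δ : ℝ) = inner ℝ δ δ := by
            have h1 : (inner ℝ (α - δ) δ : ℝ) = inner ℝ α δ - inner ℝ δ δ := inner_sub_left _ _ _
            linarith [horthγδ, h1]
          rw [this]
          field_simp
        rw [hratio] at href
        have hτ : α - (2:ℝ) • δ = (α - δ) - δ := by
          rw [two_smul]; abel
        rw [hτ] at href
        rcases hpos.2.1 _ href with hτp | hτn
        · -- (α - δ) - δ ∈ Φpos
          obtain ⟨d, hd⟩ := hdecomp _ hτp
          have hkey2 : ∀ δ' ∈ Δ, (d δ' : ℝ) + (if δ' = δ then 1 else 0) = (e δ' : ℝ) := by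
            apply coeff_unique Δ hind
            simp only [add_smul, Finset.sum_add_distrib]
            rw [← hd, single_sum Δ hδΔ, ← he]
            abel
          have := hkey2 δ hδΔ
          simp only [if_pos rfl, heδ0] at this
          have hd0 : (0:ℝ) ≤ (d δ : ℝ) := Nat.cast_nonneg _
          push_cast at this
          linarith
        · -- δ - (α - δ) ... i.e. -((α-δ)-δ) ∈ Φpos
          obtain ⟨d, hd⟩ := hdecomp _ hτn
          -- -((α-δ)-δ) = δ - (α-δ); so (sum d) + (sum e) = δ
          have hkey3 : ∀ δ' ∈ Δ, (d δ' : ℝ) + (e δ' : ℝ) = (if δ' = δ then 1 else 0) := by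
            apply coeff_unique Δ hind
            simp only [add_smul, Finset.sum_add_distrib]
            rw [← hd, ← he, single_sum Δ hδΔ]
            abel
          -- get δ'' with e δ'' ≠ 0
          have hγne : α - δ ≠ 0 := sub_ne_zero.mpr hαδe
          have hex'' : ∃ δ'' ∈ Δ, e δ'' ≠ 0 := by
            by_contra hno
            push_neg at hno
            exact hγne (by rw [he]; exact Finset.sum_eq_zero fun x hx => by simp [hno x hx])
          obtain ⟨δ'', hδ''Δ, hδ''e⟩ := hex''
          have hne'' : δ'' ≠ δ := fun h => hδ''e (h ▸ heδ0)
          have := hkey3 δ'' hδ''Δ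
          simp only [if_neg hne''] at this
          have hd0 : (0:ℝ) ≤ (d δ'' : ℝ) := Nat.cast_nonneg _
          have he0 : (0:ℝ) < (e δ'' : ℝ) := by
            exact_mod_cast Nat.pos_of_ne_zero hδ''e
          linarith
    · -- -(α - δ) ∈ Φpos : contradiction
      exfalso
      obtain ⟨d, hd⟩ := hdecomp _ hγneg
      have hkey4 : ∀ δ' ∈ Δ, (d δ' : ℝ) + (c δ' : ℝ) = (if δ' = δ then 1 else 0) := by
        apply coeff_unique Δ hind
        simp only [add_smul, Finset.sum_add_distrib]
        rw [← hd, ← hc, single_sum Δ hδΔ]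
        abel
      have hne₂ : δ₂ ≠ δ := fun h => hdisj δ hδI (h ▸ hδ₂I)
      have := hkey4 δ₂ (hI₂ hδ₂I)
      simp only [if_neg hne₂] at this
      have hd0 : (0:ℝ) ≤ (d δ₂ : ℝ) := Nat.cast_nonneg _
      have hc0 : (0:ℝ) < (c δ₂ : ℝ) := by exact_mod_cast Nat.pos_of_ne_zero hδ₂c
      linarith

end Aux

/-- Let `Δ` be the set of simple roots and `I₁, I₂ ⊆ Δ` orthogonal subsets. If
`A = A₁ ∪ A₂` with `A_j ⊆ Φ⁺_{I_j} = Φ⁺ ∩ span I_j`, then the union map is a bijection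
from the product of the sets `{A'_j ⊆ Φ⁺_{I_j} : ∑ A'_j = ∑ A_j}` onto
`{A' ⊆ Φ⁺ : ∑ A' = ∑ A}`; consequently `mult(μ(A)) = mult(μ(A₁)) · mult(μ(A₂))`. -/
theorem mult_union_orthogonal {V : Type*} [NormedAddCommGroup V] [InnerProductSpace ℝ V]
    [DecidableEq V] (Φ Φpos Δ : Finset V)
    (hΦ : IsRootSystem Φ) (hpos : IsPositiveSystem Φ Φpos)
    (hΔpos : Δ ⊆ Φpos)
    (hdecomp : ∀ α ∈ Φpos, ∃ c : V → ℕ, α = ∑ δ ∈ Δ, (c δ : ℝ) • δ)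
    (hind : LinearIndependent ℝ (fun δ : Δ => (δ : V)))
    (I₁ I₂ : Finset V) (hI₁ : I₁ ⊆ Δ) (hI₂ : I₂ ⊆ Δ)
    (horth : ∀ a ∈ I₁, ∀ b ∈ I₂, (inner ℝ a b : ℝ) = 0)
    (A₁ A₂ : Finset V)
    (hA₁ : ∀ α ∈ A₁, α ∈ Φpos ∧ α ∈ Submodule.span ℝ (I₁ : Set V))
    (hA₂ : ∀ α ∈ A₂, α ∈ Φpos ∧ α ∈ Submodule.span ℝ (I₂ : Set V)) :
    Set.BijOn (fun P : Finset V × Finset V => P.1 ∪ P.2)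
      ({A'₁ : Finset V | (∀ α ∈ A'₁, α ∈ Φpos ∧ α ∈ Submodule.span ℝ (I₁ : Set V)) ∧
          (∑ α ∈ A'₁, α) = (∑ α ∈ A₁, α)} ×ˢ
        {A'₂ : Finset V | (∀ α ∈ A'₂, α ∈ Φpos ∧ α ∈ Submodule.span ℝ (I₂ : Set V)) ∧
          (∑ α ∈ A'₂, α) = (∑ α ∈ A₂, α)})
      {A' : Finset V | A' ⊆ Φpos ∧ (∑ α ∈ A', α) = (∑ α ∈ A₁ ∪ A₂, α)} ∧
    {A' : Finset V | A' ⊆ Φpos ∧ (∑ α ∈ A', α) = (∑ α ∈ A₁ ∪ A₂, α)}.ncard =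
      {A' : Finset V | A' ⊆ Φpos ∧ (∑ α ∈ A', α) = (∑ α ∈ A₁, α)}.ncard *
        {A' : Finset V | A' ⊆ Φpos ∧ (∑ α ∈ A', α) = (∑ α ∈ A₂, α)}.ncard := by
  classical
  -- no nonzero vector is in both spans
  have hzero : ∀ x : V, x ∈ Submodule.span ℝ (I₁ : Set V) →
      x ∈ Submodule.span ℝ (I₂ : Set V) → x = 0 := fun x h1 h2 =>
    inner_self_eq_zero.mp (span_orth I₁ I₂ horth x h1 x h2)
  have hposne : ∀ x ∈ Φpos, x ≠ (0:V) := fun x hx => root_ne_zero hΦ (hpos.1 hx)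
  -- disjointness of any two sets with the span properties
  have hdisjBB : ∀ B₁ B₂ : Finset V,
      (∀ α ∈ B₁, α ∈ Φpos ∧ α ∈ Submodule.span ℝ (I₁ : Set V)) →
      (∀ α ∈ B₂, α ∈ Φpos ∧ α ∈ Submodule.span ℝ (I₂ : Set V)) → Disjoint B₁ B₂ := by
    intro B₁ B₂ h1 h2
    rw [Finset.disjoint_left]
    intro a ha1 ha2
    exact hposne a (h1 a ha1).1 (hzero a (h1 a ha1).2 (h2 a ha2).2)
  have hA₁₂ : ∑ α ∈ A₁ ∪ A₂, α = (∑ α ∈ A₁, α) + ∑ α ∈ A₂, α :=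
    Finset.sum_union (hdisjBB A₁ A₂ hA₁ hA₂)
  -- total coefficient function
  set C : V → V → ℕ := fun α =>
    if h : α ∈ Φpos then Classical.choose (hdecomp α h) else fun _ => 0 with hCdef
  have hC : ∀ α ∈ Φpos, α = ∑ δ ∈ Δ, (C α δ : ℝ) • δ := by
    intro α h
    simp only [hCdef, dif_pos h]
    exact Classical.choose_spec (hdecomp α h)
  have hBsum : ∀ B : Finset V, B ⊆ Φpos →
      ∑ α ∈ B, α = ∑ δ ∈ Δ, ((∑ α ∈ B, C α δ : ℕ) : ℝ) • δ := by
    intro B hB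
    rw [Finset.sum_congr rfl (fun α hα => hC α (hB hα)), Finset.sum_comm]
    exact Finset.sum_congr rfl fun δ _ => by rw [← Finset.sum_smul]; norm_cast
  have hA₁sub : A₁ ⊆ Φpos := fun α h => (hA₁ α h).1
  have hA₂sub : A₂ ⊆ Φpos := fun α h => (hA₂ α h).1
  -- supports
  have hsuppA₁ : ∀ α ∈ A₁, ∀ δ ∈ Δ, δ ∉ I₁ → C α δ = 0 := fun α h =>
    (mem_span_iff_supp Δ hind I₁ hI₁ (C α) α (hC α (hA₁ α h).1)).mp (hA₁ α h).2
  have hsuppA₂ : ∀ α ∈ A₂, ∀ δ ∈ Δ, δ ∉ I₂ → C α δ = 0 := fun α h =>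
    (mem_span_iff_supp Δ hind I₂ hI₂ (C α) α (hC α (hA₂ α h).1)).mp (hA₂ α h).2
  -- a generic recovery: any A' ⊆ Φpos with sum ∑ A₁ consists of elements of span I₁
  have hrecover : ∀ (A₀ I : Finset V), I ⊆ Δ → (∀ α ∈ A₀, ∀ δ ∈ Δ, δ ∉ I → C α δ = 0) →
      A₀ ⊆ Φpos →
      ∀ A' : Finset V, A' ⊆ Φpos → (∑ α ∈ A', α) = (∑ α ∈ A₀, α) →
      ∀ α ∈ A', α ∈ Submodule.span ℝ (I : Set V) := by
    intro A₀ I hIΔ hsupp hA₀sub A' hA'sub hA'sum α hαA'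
    have hkey : ∀ δ ∈ Δ, ((∑ α ∈ A', C α δ : ℕ) : ℝ) = ((∑ α ∈ A₀, C α δ : ℕ) : ℝ) := by
      apply coeff_unique Δ hind
      rw [← hBsum A' hA'sub, ← hBsum A₀ hA₀sub]
      exact hA'sum
    refine (mem_span_iff_supp Δ hind I hIΔ (C α) α (hC α (hA'sub hαA'))).mpr ?_
    intro δ hδ hδI
    have h0 : (∑ α ∈ A₀, C α δ) = 0 :=
      Finset.sum_eq_zero fun x hx => hsupp x hx δ hδ hδI
    have h1 : (∑ α ∈ A', C α δ) = 0 := by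
      have := hkey δ hδ
      rw [h0] at this
      exact_mod_cast this
    exact Finset.sum_eq_zero_iff.mp h1 α hαA'
  -- the three sets
  set S₁ : Set (Finset V) :=
    {A'₁ : Finset V | (∀ α ∈ A'₁, α ∈ Φpos ∧ α ∈ Submodule.span ℝ (I₁ : Set V)) ∧
      (∑ α ∈ A'₁, α) = (∑ α ∈ A₁, α)} with hS₁def
  set S₂ : Set (Finset V) :=
    {A'₂ : Finset V | (∀ α ∈ A'₂, α ∈ Φpos ∧ α ∈ Submodule.span ℝ (I₂ : Set V)) ∧
      (∑ α ∈ A'₂, α) = (∑ α ∈ A₂, α)} with hS₂def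
  set T : Set (Finset V) :=
    {A' : Finset V | A' ⊆ Φpos ∧ (∑ α ∈ A', α) = (∑ α ∈ A₁ ∪ A₂, α)} with hTdef
  have hbij : Set.BijOn (fun P : Finset V × Finset V => P.1 ∪ P.2) (S₁ ×ˢ S₂) T := by
    refine ⟨?_, ?_, ?_⟩
    · -- MapsTo
      rintro ⟨B₁, B₂⟩ ⟨hB₁, hB₂⟩
      simp only [hS₁def, Set.mem_setOf_eq] at hB₁
      simp only [hS₂def, Set.mem_setOf_eq] at hB₂
      constructor
      · intro x hx
        rcases Finset.mem_union.mp hx with h | h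
        · exact (hB₁.1 x h).1
        · exact (hB₂.1 x h).1
      · rw [Finset.sum_union (hdisjBB B₁ B₂ hB₁.1 hB₂.1), hB₁.2, hB₂.2, hA₁₂]
    · -- InjOn
      rintro ⟨B₁, B₂⟩ ⟨hB₁, hB₂⟩ ⟨D₁, D₂⟩ ⟨hD₁, hD₂⟩ heq
      simp only [hS₁def, Set.mem_setOf_eq] at hB₁ hD₁
      simp only [hS₂def, Set.mem_setOf_eq] at hB₂ hD₂
      simp only [Prod.mk.injEq] at *
      have hcomp : ∀ (X₁ X₂ Y₁ Y₂ : Finset V),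
          (∀ α ∈ X₁, α ∈ Φpos ∧ α ∈ Submodule.span ℝ (I₁ : Set V)) →
          (∀ α ∈ Y₁, α ∈ Φpos ∧ α ∈ Submodule.span ℝ (I₁ : Set V)) →
          (∀ α ∈ Y₂, α ∈ Φpos ∧ α ∈ Submodule.span ℝ (I₂ : Set V)) →
          X₁ ∪ X₂ = Y₁ ∪ Y₂ → X₁ ⊆ Y₁ := by
        intro X₁ X₂ Y₁ Y₂ hX₁ hY₁ hY₂ hu α hα
        have : α ∈ Y₁ ∪ Y₂ := hu ▸ Finset.mem_union_left _ hα
        rcases Finset.mem_union.mp this with h | h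
        · exact h
        · exact absurd (hzero α (hX₁ α hα).2 (hY₂ α h).2) (hposne α (hX₁ α hα).1)
      have hcomp2 : ∀ (X₁ X₂ Y₁ Y₂ : Finset V),
          (∀ α ∈ X₂, α ∈ Φpos ∧ α ∈ Submodule.span ℝ (I₂ : Set V)) →
          (∀ α ∈ Y₁, α ∈ Φpos ∧ α ∈ Submodule.span ℝ (I₁ : Set V)) →
          (∀ α ∈ Y₂, α ∈ Φpos ∧ α ∈ Submodule.span ℝ (I₂ : Set V)) →
          X₁ ∪ X₂ = Y₁ ∪ Y₂ → X₂ ⊆ Y₂ := by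
        intro X₁ X₂ Y₁ Y₂ hX₂ hY₁ hY₂ hu α hα
        have : α ∈ Y₁ ∪ Y₂ := hu ▸ Finset.mem_union_right _ hα
        rcases Finset.mem_union.mp this with h | h
        · exact absurd (hzero α (hY₁ α h).2 (hX₂ α hα).2) (hposne α (hX₂ α hα).1)
        · exact h
      exact ⟨Finset.Subset.antisymm (hcomp B₁ B₂ D₁ D₂ hB₁.1 hD₁.1 hD₂.1 heq)
          (hcomp D₁ D₂ B₁ B₂ hD₁.1 hB₁.1 hB₂.1 heq.symm),
        Finset.Subset.antisymm (hcomp2 B₁ B₂ D₁ D₂ hB₂.1 hD₁.1 hD₂.1 heq)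
          (hcomp2 D₁ D₂ B₁ B₂ hD₂.1 hB₁.1 hB₂.1 heq.symm)⟩
    · -- SurjOn
      intro A' hA'
      simp only [hTdef, Set.mem_setOf_eq] at hA'
      obtain ⟨hA'sub, hA'sum⟩ := hA'
      -- each element of A' has support in I₁ ∪ I₂
      have hAsupp : ∀ α ∈ A₁ ∪ A₂, ∀ δ ∈ Δ, δ ∉ I₁ ∪ I₂ → C α δ = 0 := by
        intro α hα δ hδ hδI
        rcases Finset.mem_union.mp hα with h | h
        · exact hsuppA₁ α h δ hδ (fun hh => hδI (Finset.mem_union_left _ hh))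
        · exact hsuppA₂ α h δ hδ (fun hh => hδI (Finset.mem_union_right _ hh))
      have hAusub : A₁ ∪ A₂ ⊆ Φpos := Finset.union_subset hA₁sub hA₂sub
      have hspan12 : ∀ α ∈ A', α ∈ Submodule.span ℝ ((I₁ ∪ I₂ : Finset V) : Set V) :=
        hrecover (A₁ ∪ A₂) (I₁ ∪ I₂) (Finset.union_subset hI₁ hI₂) hAsupp hAusub
          A' hA'sub hA'sum
      -- hence each α ∈ A' is in span I₁ or span I₂ by no_mixed
      have hsplit : ∀ α ∈ A',
          α ∈ Submodule.span ℝ (I₁ : Set V) ∨ α ∈ Submodule.span ℝ (I₂ : Set V) := by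
        intro α hα
        have hαpos := hA'sub hα
        have hsupp' : ∀ δ ∈ Δ, δ ∉ I₁ → δ ∉ I₂ → C α δ = 0 := by
          have := (mem_span_iff_supp Δ hind (I₁ ∪ I₂) (Finset.union_subset hI₁ hI₂)
            (C α) α (hC α hαpos)).mp (hspan12 α hα)
          intro δ hδ h1 h2
          exact this δ hδ (fun h => (Finset.mem_union.mp h).elim h1 h2)
        exact no_mixed Φ Φpos Δ hΦ hpos hΔpos hdecomp hind I₁ I₂ hI₁ hI₂ horth
          (∑ δ ∈ Δ, C α δ) α hαpos (C α) (hC α hαpos) le_rfl hsupp'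
      set B₁ : Finset V := A'.filter (fun α => α ∈ Submodule.span ℝ (I₁ : Set V)) with hB₁def
      set B₂ : Finset V := A'.filter (fun α => α ∉ Submodule.span ℝ (I₁ : Set V)) with hB₂def
      have hB₁prop : ∀ α ∈ B₁, α ∈ Φpos ∧ α ∈ Submodule.span ℝ (I₁ : Set V) := by
        intro α hα
        rw [hB₁def, Finset.mem_filter] at hα
        exact ⟨hA'sub hα.1, hα.2⟩
      have hB₂prop : ∀ α ∈ B₂, α ∈ Φpos ∧ α ∈ Submodule.span ℝ (I₂ : Set V) := by
        intro α hα
        rw [hB₂def, Finset.mem_filter] at hα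
        exact ⟨hA'sub hα.1, (hsplit α hα.1).resolve_left hα.2⟩
      have hunion : B₁ ∪ B₂ = A' := Finset.filter_union_filter_not_eq _ A'
      have hsumsplit : (∑ α ∈ B₁, α) + (∑ α ∈ B₂, α) = ∑ α ∈ A', α :=
        Finset.sum_filter_add_sum_filter_not A' _ _
      -- show the component sums agree
      have hB₁span : (∑ α ∈ B₁, α) ∈ Submodule.span ℝ (I₁ : Set V) :=
        Submodule.sum_mem _ fun α hα => (hB₁prop α hα).2
      have hB₂span : (∑ α ∈ B₂, α) ∈ Submodule.span ℝ (I₂ : Set V) :=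
        Submodule.sum_mem _ fun α hα => (hB₂prop α hα).2
      have hA₁span : (∑ α ∈ A₁, α) ∈ Submodule.span ℝ (I₁ : Set V) :=
        Submodule.sum_mem _ fun α hα => (hA₁ α hα).2
      have hA₂span : (∑ α ∈ A₂, α) ∈ Submodule.span ℝ (I₂ : Set V) :=
        Submodule.sum_mem _ fun α hα => (hA₂ α hα).2
      have htot : (∑ α ∈ B₁, α) + (∑ α ∈ B₂, α) = (∑ α ∈ A₁, α) + (∑ α ∈ A₂, α) := by
        rw [hsumsplit, hA'sum, hA₁₂]
      have hdiff : (∑ α ∈ B₁, α) - (∑ α ∈ A₁, α) = (∑ α ∈ A₂, α) - (∑ α ∈ B₂, α) := by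
        rw [sub_eq_sub_iff_add_eq_add]
        rw [htot]; exact add_comm _ _
      have hd1 : (∑ α ∈ B₁, α) - (∑ α ∈ A₁, α) ∈ Submodule.span ℝ (I₁ : Set V) :=
        Submodule.sub_mem _ hB₁span hA₁span
      have hd2 : (∑ α ∈ B₁, α) - (∑ α ∈ A₁, α) ∈ Submodule.span ℝ (I₂ : Set V) := by
        rw [hdiff]; exact Submodule.sub_mem _ hA₂span hB₂span
      have hdz := hzero _ hd1 hd2
      have hs1 : (∑ α ∈ B₁, α) = ∑ α ∈ A₁, α := sub_eq_zero.mp hdz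
      have hs2 : (∑ α ∈ B₂, α) = ∑ α ∈ A₂, α := by
        have := htot
        rw [hs1] at this
        exact add_left_cancel this
      refine ⟨(B₁, B₂), ?_, ?_⟩
      · exact ⟨⟨hB₁prop, hs1⟩, ⟨hB₂prop, hs2⟩⟩
      · exact hunion
  refine ⟨hbij, ?_⟩
  -- identify the factor sets with S₁ and S₂
  have hT₁ : {A' : Finset V | A' ⊆ Φpos ∧ (∑ α ∈ A', α) = (∑ α ∈ A₁, α)} = S₁ := by
    ext A'
    simp only [hS₁def, Set.mem_setOf_eq]
    constructor
    · rintro ⟨hsub, hsum⟩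
      exact ⟨fun α hα => ⟨hsub hα,
        hrecover A₁ I₁ hI₁ hsuppA₁ hA₁sub A' hsub hsum α hα⟩, hsum⟩
    · rintro ⟨hprop, hsum⟩
      exact ⟨fun α hα => (hprop α hα).1, hsum⟩
  have hT₂ : {A' : Finset V | A' ⊆ Φpos ∧ (∑ α ∈ A', α) = (∑ α ∈ A₂, α)} = S₂ := by
    ext A'
    simp only [hS₂def, Set.mem_setOf_eq]
    constructor
    · rintro ⟨hsub, hsum⟩
      exact ⟨fun α hα => ⟨hsub hα,
        hrecover A₂ I₂ hI₂ hsuppA₂ hA₂sub A' hsub hsum α hα⟩, hsum⟩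
    · rintro ⟨hprop, hsum⟩
      exact ⟨fun α hα => (hprop α hα).1, hsum⟩
  rw [hT₁, hT₂]
  calc T.ncard = ((fun P : Finset V × Finset V => P.1 ∪ P.2) '' (S₁ ×ˢ S₂)).ncard := by
        rw [hbij.image_eq]
    _ = (S₁ ×ˢ S₂).ncard := Set.ncard_image_of_injOn hbij.injOn
    _ = S₁.ncard * S₂.ncard := by
        rw [← Nat.card_coe_set_eq, ← Nat.card_coe_set_eq, ← Nat.card_coe_set_eq,
          ← Nat.card_prod]
        exact Nat.card_congr (Equiv.Set.prod S₁ S₂)
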